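/- arXiv:2512.13491 — 3 statements merged into one kernel-verified Lean document; each statement's English description precedes it below -/
import Mathlib

section
/- Let (K_t)_{t∈ℤ} be a stationary process over natural numbers and let V(t) := E[card{K_1,...,K_t}] be the expected number of distinct values among the first t terms. Then lim_{t→∞} V(t)/t = 0. -/
/-!
Values at most `g` contribute at most `g + 1` to the vocabulary, and every other value is `Kᵢ`
for some `1 ≤ i ≤ t` with `Kᵢ > g`. By stationarity each such event has
probability `P(K₁ > g)`, so `V(t) ≤ g + 1 + t · P(K₁ > g)`. Dividing by `t`, letting `t → ∞` and
then `g → ∞` gives the claim.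
-/

open MeasureTheory Filter

/-- The block (K_{a+1},...,K_{a+s}) of a process. -/
def blockProc {Ω S : Type*} (K : ℤ → Ω → S) (a : ℤ) (s : ℕ) : Ω → (Fin s → S) :=
  fun ω i => K (a + 1 + (i : ℕ)) ω

/-- Expected number of distinct values among K_1,...,K_t. -/
noncomputable def Vvoc {Ω : Type*} [MeasurableSpace Ω] (μ : Measure Ω)
    (K : ℤ → Ω → ℕ) (t : ℕ) : ℝ :=
  ∫ ω, ((Finset.image (fun i : Fin t => K (1 + (i : ℕ)) ω) Finset.univ).card : ℝ) ∂μ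

open Finset in
theorem Finset.card_image_le_add_card_filter_lt {ι : Type*} (s : Finset ι) (f : ι → ℕ) (g : ℕ) :
    #(s.image f) ≤ g + 1 + #{i ∈ s | g < f i} := by
  have hsub : s.image f ⊆ range (g + 1) ∪ {i ∈ s | g < f i}.image f := by
    intro n hn
    obtain ⟨i, hi, rfl⟩ := mem_image.1 hn
    rcases le_or_gt (f i) g with h | h
    · exact mem_union_left _ (mem_range.2 (Nat.lt_succ_of_le h))
    · exact mem_union_right _ (mem_image_of_mem f (mem_filter.2 ⟨hi, h⟩))
  calc #(s.image f) ≤ #(range (g + 1) ∪ {i ∈ s | g < f i}.image f) := card_le_card hsub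
    _ ≤ #(range (g + 1)) + #({i ∈ s | g < f i}.image f) := card_union_le _ _
    _ ≤ g + 1 + #{i ∈ s | g < f i} := by
      rw [card_range]; exact Nat.add_le_add_left card_image_le _

theorem tendsto_measureReal_preimage_Ioi_atTop {Ω : Type*} [MeasurableSpace Ω] (μ : Measure Ω)
    [IsFiniteMeasure μ] {X : Ω → ℕ} (hX : Measurable X) :
    Tendsto (fun g : ℕ => μ.real (X ⁻¹' Set.Ioi g)) atTop (nhds 0) := by
  have hempty : ⋂ g : ℕ, X ⁻¹' Set.Ioi g = ∅ :=
    Set.eq_empty_of_forall_notMem fun ω hω => lt_irrefl (X ω) (Set.mem_iInter.1 hω (X ω))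
  have h := tendsto_measure_iInter_atTop (μ := μ)
    (fun g => (hX measurableSet_Ioi).nullMeasurableSet)
    (fun _ _ hab => Set.preimage_mono (Set.Ioi_subset_Ioi hab)) ⟨0, measure_ne_top μ _⟩
  rw [hempty, measure_empty] at h
  exact (ENNReal.tendsto_toReal ENNReal.zero_ne_top).comp h

theorem tendsto_div_atTop_zero_of_le_add_mul {v p C : ℕ → ℝ} (hv : ∀ t, 0 ≤ v t)
    (hp : Tendsto p atTop (nhds 0)) (hle : ∀ t g, v t ≤ C g + t * p g) :
    Tendsto (fun t : ℕ => v t / t) atTop (nhds 0) := by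
  refine tendsto_order.2 ⟨fun a ha => Eventually.of_forall fun t =>
    ha.trans_le (div_nonneg (hv t) t.cast_nonneg), fun ε hε => ?_⟩
  obtain ⟨g, hg⟩ := (hp.eventually (gt_mem_nhds (half_pos hε))).exists
  have hC : ∀ᶠ t : ℕ in atTop, C g / t < ε / 2 :=
    (tendsto_const_div_atTop_nhds_zero_nat (C g)).eventually (gt_mem_nhds (half_pos hε))
  filter_upwards [hC, eventually_gt_atTop 0] with t ht ht0
  have htpos : (0 : ℝ) < t := Nat.cast_pos.2 ht0
  calc v t / t ≤ (C g + t * p g) / t := by gcongr; exact hle t g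
    _ = C g / t + p g := by field_simp
    _ < ε := by linarith

theorem map_eq_map_one_of_stationary {Ω S : Type*} [MeasurableSpace Ω] [MeasurableSpace S]
    {μ : Measure Ω} {K : ℤ → Ω → S} (hmeas : ∀ t, Measurable (K t))
    (hstat : ∀ (a : ℤ) (s : ℕ),
      Measure.map (blockProc K a s) μ = Measure.map (blockProc K 0 s) μ) (a : ℤ) :
    μ.map (K a) = μ.map (K 1) := by
  have hblock : ∀ b, Measurable (blockProc K b 1) := fun b =>
    measurable_pi_lambda _ fun _ => hmeas _
  have hK : ∀ b, K b = (fun v : Fin 1 → S => v 0) ∘ blockProc K (b - 1) 1 := fun b => by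
    funext ω; simp [blockProc]
  rw [hK a, hK 1, ← Measure.map_map (measurable_pi_apply 0) (hblock _),
    ← Measure.map_map (measurable_pi_apply 0) (hblock _), hstat, hstat (1 - 1)]

theorem Vvoc_le_add_mul {Ω : Type*} [MeasurableSpace Ω] {μ : Measure Ω} [IsProbabilityMeasure μ]
    {K : ℤ → Ω → ℕ} (hmeas : ∀ t, Measurable (K t))
    (hstat : ∀ (a : ℤ) (s : ℕ),
      Measure.map (blockProc K a s) μ = Measure.map (blockProc K 0 s) μ) (t g : ℕ) :
    Vvoc μ K t ≤ (g + 1 : ℝ) + t * μ.real (K 1 ⁻¹' Set.Ioi g) := by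
  set S : Fin t → Set Ω := fun i => K (1 + (i : ℕ)) ⁻¹' Set.Ioi g
  have hS : ∀ i, MeasurableSet (S i) := fun i => hmeas _ measurableSet_Ioi
  have hSμ : ∀ i, μ.real (S i) = μ.real (K 1 ⁻¹' Set.Ioi g) := fun i => by
    rw [measureReal_def, measureReal_def, ← Measure.map_apply (hmeas _) measurableSet_Ioi,
      map_eq_map_one_of_stationary hmeas hstat, Measure.map_apply (hmeas _) measurableSet_Ioi]
  have hpt : ∀ ω, ((Finset.univ.image fun i : Fin t => K (1 + (i : ℕ)) ω).card : ℝ)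
      ≤ g + 1 + ∑ i, (S i).indicator 1 ω := fun ω => by
    have h := Finset.card_image_le_add_card_filter_lt Finset.univ
      (fun i : Fin t => K (1 + (i : ℕ)) ω) g
    have hcount : ((Finset.univ.filter fun i : Fin t => g < K (1 + (i : ℕ)) ω).card : ℝ)
        = ∑ i, (S i).indicator 1 ω := by
      rw [Finset.card_filter, Nat.cast_sum]
      refine Finset.sum_congr rfl fun i _ => ?_
      by_cases hi : g < K (1 + (i : ℕ)) ω <;> simp [S, hi]
    rw [← hcount]
    exact_mod_cast h
  have hint : ∀ i, Integrable ((S i).indicator (1 : Ω → ℝ)) μ := fun i =>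
    (integrable_const 1).indicator (hS i)
  calc Vvoc μ K t ≤ ∫ ω, ((g + 1 : ℝ) + ∑ i, (S i).indicator 1 ω) ∂μ :=
        integral_mono_of_nonneg (ae_of_all _ fun ω => by positivity)
          ((integrable_const _).add (integrable_finsetSum _ fun i _ => hint i)) (ae_of_all _ hpt)
    _ = (g + 1 : ℝ) + ∑ i, μ.real (S i) := by
        rw [integral_add (integrable_const _) (integrable_finsetSum _ fun i _ => hint i),
          integral_finsetSum _ fun i _ => hint i]
        simp [integral_indicator_one (hS _)]
    _ = (g + 1 : ℝ) + t * μ.real (K 1 ⁻¹' Set.Ioi g) := by simp [hSμ]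

/-- For a stationary process over natural numbers, the expected vocabulary rate
V(t)/t tends to 0. -/
theorem stmt8 {Ω : Type*} [MeasurableSpace Ω] (μ : Measure Ω) [IsProbabilityMeasure μ]
    (K : ℤ → Ω → ℕ) (hmeas : ∀ t, Measurable (K t))
    (hstat : ∀ (a : ℤ) (s : ℕ),
      Measure.map (blockProc K a s) μ = Measure.map (blockProc K 0 s) μ) :
    Tendsto (fun t : ℕ => Vvoc μ K t / t) atTop (nhds 0) :=
  tendsto_div_atTop_zero_of_le_add_mul (fun _ => integral_nonneg fun _ => Nat.cast_nonneg _)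
    (tendsto_measureReal_preimage_Ioi_atTop μ (hmeas 1)) (Vvoc_le_add_mul hmeas hstat)
end

section
/- Let (K_t) be an IID process over ℕ with marginal probabilities p_k, and suppose Σ_k 1{p_k ≥ p} ≤ C₀ p^{-β} for some β ∈ (0,1), C₀ > 0, and all p > 0. Then ΔV(t) ≤ Γ(1-β)·C₀·t^{β-1} for all t ≥ 1, where V(t) = Σ_k (1-(1-p_k)^t). -/
/-!
Since `V(t + 1) - V(t) = ∑ₖ pₖ (1 - pₖ)ᵗ` and `(1 - p)ᵗ ≤ e^{-tp}`, each increment term is at most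
`∫₀^{pₖ} e^{-tx} dx`. Summing over `k` and exchanging sum and integral, the integrand picks up the
factor `#{k | x ≤ pₖ} ≤ C₀ x^{-β}`, and `∫₀^∞ C₀ x^{-β} e^{-tx} dx = Γ(1 - β) C₀ t^{β - 1}`.
-/

open Real MeasureTheory Set

section Increment

variable {p : ℕ → ℝ}

lemma summable_one_sub_one_sub_pow (hp0 : ∀ k, 0 ≤ p k) (hp1 : ∀ k, p k ≤ 1) (hp : Summable p)
    (n : ℕ) : Summable fun k => 1 - (1 - p k) ^ n := by
  refine .of_nonneg_of_le (fun k => ?_) (fun k => ?_) (hp.mul_left (n : ℝ))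
  · linarith [pow_le_one₀ (n := n) (sub_nonneg.2 (hp1 k)) (by linarith [hp0 k])]
  · linarith [one_add_mul_sub_le_pow (a := 1 - p k) (by linarith [hp1 k]) n]

lemma tsum_one_sub_pow_succ_sub_tsum (hp0 : ∀ k, 0 ≤ p k) (hp1 : ∀ k, p k ≤ 1)
    (hp : Summable p) (t : ℕ) :
    (∑' k, (1 - (1 - p k) ^ (t + 1))) - ∑' k, (1 - (1 - p k) ^ t) = ∑' k, p k * (1 - p k) ^ t := by
  rw [← (summable_one_sub_one_sub_pow hp0 hp1 hp _).tsum_sub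
    (summable_one_sub_one_sub_pow hp0 hp1 hp _)]
  exact tsum_congr fun k => by ring

end Increment

lemma ofReal_mul_one_sub_pow_le_setLIntegral {x : ℝ} (hx0 : 0 ≤ x) (hx1 : x ≤ 1) (t : ℕ) :
    ENNReal.ofReal (x * (1 - x) ^ t) ≤ ∫⁻ y in Ioc 0 x, ENNReal.ofReal (exp (-(t * y))) := by
  have hpow : (1 - x) ^ t ≤ exp (-(t * x)) := by
    calc (1 - x) ^ t ≤ exp (-x) ^ t :=
          pow_le_pow_left₀ (by linarith) (by linarith [add_one_le_exp (-x)]) t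
      _ = exp (-(t * x)) := by rw [← exp_nat_mul]; ring_nf
  calc ENNReal.ofReal (x * (1 - x) ^ t)
      ≤ ∫⁻ _ in Ioc 0 x, ENNReal.ofReal (exp (-(t * x))) := by
        rw [setLIntegral_const, volume_Ioc, sub_zero, ← ENNReal.ofReal_mul (exp_nonneg _)]
        exact ENNReal.ofReal_le_ofReal (by rw [mul_comm]; gcongr)
    _ ≤ ∫⁻ y in Ioc 0 x, ENNReal.ofReal (exp (-(t * y))) := by
        refine setLIntegral_mono' measurableSet_Ioc fun y hy => ?_
        gcongr
        exact hy.2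

lemma tsum_indicator_Iic_le {p : ℕ → ℝ} {x N : ℝ}
    (hN : ∀ s : Finset ℕ, (∀ k ∈ s, x ≤ p k) → (s.card : ℝ) ≤ N) (c : ENNReal) :
    ∑' k, (Iic (p k)).indicator (fun _ => c) x ≤ ENNReal.ofReal N * c := by
  have hind : ∀ k, (Iic (p k)).indicator (fun _ => c) x = (if x ≤ p k then 1 else 0) * c := by
    intro k
    by_cases h : x ≤ p k <;> simp [h]
  simp_rw [hind, ENNReal.tsum_mul_right]
  gcongr
  rw [ENNReal.tsum_eq_iSup_sum]
  refine iSup_le fun s => ?_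
  classical
  rw [Finset.sum_boole, ← ENNReal.ofReal_natCast]
  exact ENNReal.ofReal_le_ofReal (hN _ fun k hk => (Finset.mem_filter.mp hk).2)

lemma tsum_setLIntegral_Ioc_le {p : ℕ → ℝ} {N : ℝ → ℝ} {g : ℝ → ENNReal} (hg : Measurable g)
    (hN : ∀ x, 0 < x → ∀ s : Finset ℕ, (∀ k ∈ s, x ≤ p k) → (s.card : ℝ) ≤ N x) :
    ∑' k, ∫⁻ x in Ioc 0 (p k), g x ≤ ∫⁻ x in Ioi 0, ENNReal.ofReal (N x) * g x := by
  have hrestrict : ∀ k, ∫⁻ x in Ioc 0 (p k), g x = ∫⁻ x in Ioi 0, (Iic (p k)).indicator g x := by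
    intro k
    rw [lintegral_indicator measurableSet_Iic, Measure.restrict_restrict measurableSet_Iic,
      inter_comm, Ioi_inter_Iic]
  simp_rw [hrestrict]
  rw [← lintegral_tsum fun k => (hg.indicator measurableSet_Iic).aemeasurable]
  refine setLIntegral_mono' measurableSet_Ioi fun x hx => ?_
  exact tsum_indicator_Iic_le (hN x hx) (g x)

lemma lintegral_rpow_neg_mul_exp_neg_mul {β t C : ℝ} (hβ : β < 1) (ht : 0 < t) (hC : 0 ≤ C) :
    ∫⁻ x in Ioi 0, ENNReal.ofReal (C * x ^ (-β)) * ENNReal.ofReal (exp (-(t * x))) =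
      ENNReal.ofReal (Gamma (1 - β) * C * t ^ (β - 1)) := by
  have hint : IntegrableOn (fun x => C * (x ^ (-β) * exp (-(t * x)))) (Ioi 0) := by
    have h := integrableOn_rpow_mul_exp_neg_mul_rpow (s := -β) (by linarith) zero_lt_one ht
    simp only [rpow_one, neg_mul] at h
    exact h.const_mul C
  have hval : ∫ x in Ioi 0, x ^ (-β) * exp (-(t * x)) = (1 / t) ^ (1 - β) * Gamma (1 - β) := by
    simpa using integral_rpow_mul_exp_neg_mul_Ioi (a := 1 - β) (by linarith) ht
  calc ∫⁻ x in Ioi 0, ENNReal.ofReal (C * x ^ (-β)) * ENNReal.ofReal (exp (-(t * x)))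
      = ∫⁻ x in Ioi 0, ENNReal.ofReal (C * (x ^ (-β) * exp (-(t * x)))) := by
        refine setLIntegral_congr_fun measurableSet_Ioi fun x hx => ?_
        rw [← ENNReal.ofReal_mul (mul_nonneg hC (rpow_nonneg (le_of_lt hx) _)), mul_assoc]
    _ = ENNReal.ofReal (Gamma (1 - β) * C * t ^ (β - 1)) := by
        rw [← ofReal_integral_eq_lintegral_ofReal hint, integral_const_mul, hval, one_div,
          inv_rpow ht.le, ← rpow_neg ht.le, neg_sub]
        · ring_nf
        · filter_upwards [self_mem_ae_restrict measurableSet_Ioi] with x hx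
          exact mul_nonneg hC (mul_nonneg (rpow_nonneg (le_of_lt hx) _) (exp_nonneg _))

theorem stmt11_general (p : ℕ → ℝ) (hp : ∀ k, 0 ≤ p k) (hps : HasSum p 1)
    (β C₀ : ℝ) (hβ1 : β < 1) (hC₀ : 0 < C₀)
    (htail : ∀ q : ℝ, 0 < q → ∀ s : Finset ℕ, (∀ k ∈ s, q ≤ p k) →
      (s.card : ℝ) ≤ C₀ * q ^ (-β)) :
    ∀ t : ℕ, 1 ≤ t →
      (∑' k : ℕ, (1 - (1 - p k) ^ (t + 1))) - (∑' k : ℕ, (1 - (1 - p k) ^ t)) ≤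
        Real.Gamma (1 - β) * C₀ * (t : ℝ) ^ (β - 1) := by
  intro t ht
  have hp1 : ∀ k, p k ≤ 1 := fun k => le_hasSum hps k fun i _ => hp i
  have ht0 : (0 : ℝ) < t := by exact_mod_cast ht
  have hterm0 : ∀ k, 0 ≤ p k * (1 - p k) ^ t :=
    fun k => mul_nonneg (hp k) (pow_nonneg (sub_nonneg.2 (hp1 k)) t)
  have hterm_summable : Summable fun k => p k * (1 - p k) ^ t :=
    .of_nonneg_of_le hterm0 (fun k => mul_le_of_le_one_right (hp k)
      (pow_le_one₀ (sub_nonneg.2 (hp1 k)) (by linarith [hp k]))) hps.summable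
  have hGamma : 0 < Gamma (1 - β) := Gamma_pos_of_pos (by linarith)
  rw [tsum_one_sub_pow_succ_sub_tsum hp hp1 hps.summable,
    ← ENNReal.ofReal_le_ofReal_iff (by positivity),
    ENNReal.ofReal_tsum_of_nonneg hterm0 hterm_summable]
  calc ∑' k, ENNReal.ofReal (p k * (1 - p k) ^ t)
      ≤ ∑' k, ∫⁻ x in Ioc 0 (p k), ENNReal.ofReal (exp (-(t * x))) :=
        ENNReal.tsum_le_tsum fun k => ofReal_mul_one_sub_pow_le_setLIntegral (hp k) (hp1 k) t
    _ ≤ ∫⁻ x in Ioi 0, ENNReal.ofReal (C₀ * x ^ (-β)) * ENNReal.ofReal (exp (-(t * x))) :=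
        tsum_setLIntegral_Ioc_le (by fun_prop) htail
    _ = ENNReal.ofReal (Gamma (1 - β) * C₀ * t ^ (β - 1)) :=
        lintegral_rpow_neg_mul_exp_neg_mul hβ1 ht0 hC₀.le

/-- For an IID process with marginal probabilities p_k satisfying the tail bound
Σ_k 1{p_k ≥ p} ≤ C₀ p^{-β}, the increment of the expected vocabulary
V(t) = Σ_k (1-(1-p_k)^t) satisfies ΔV(t) ≤ Γ(1-β) C₀ t^{β-1}. -/
theorem stmt11 (p : ℕ → ℝ) (hp : ∀ k, 0 ≤ p k) (hps : HasSum p 1)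
    (β C₀ : ℝ) (hβ0 : 0 < β) (hβ1 : β < 1) (hC₀ : 0 < C₀)
    (htail : ∀ q : ℝ, 0 < q → ∀ s : Finset ℕ, (∀ k ∈ s, q ≤ p k) →
      (s.card : ℝ) ≤ C₀ * q ^ (-β)) :
    ∀ t : ℕ, 1 ≤ t →
      (∑' k : ℕ, (1 - (1 - p k) ^ (t + 1))) - (∑' k : ℕ, (1 - (1 - p k) ^ t)) ≤
        Real.Gamma (1 - β) * C₀ * (t : ℝ) ^ (β - 1) :=
  stmt11_general p hp hps β C₀ hβ1 hC₀ htail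
end

section
/- Let v : ℕ∪{0} → ℝ be a Hausdorff sequence admitting representation v(t) = ∫_{[0,1]} (1−(1−p)^t)/p dμ(p) (with the integrand interpreted as t at p=0) for a probability measure μ on [0,1] with μ({1}) = 0, and define Taylor elements v(t‖m) := (−1)^{m+1} C(t,m) Δ^m v(t−m) for 1 ≤ m ≤ t. Then Σ_{m=1}^{t} v(t‖m) = v(t) and Σ_{m=1}^{t} m·v(t‖m) = t for all t ≥ 1. -/
open MeasureTheory

/-- Iterated forward difference operator Δ^m. -/
def fdiff : ℕ → (ℕ → ℝ) → (ℕ → ℝ)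
  | 0, v => v
  | m + 1, v => fun t => fdiff m v (t + 1) - fdiff m v t

/-- Taylor elements v(t‖m) := (−1)^{m+1} C(t,m) Δ^m v(t−m). -/
noncomputable def taylorElem (v : ℕ → ℝ) (t m : ℕ) : ℝ :=
  (-1 : ℝ) ^ (m + 1) * (t.choose m : ℝ) * fdiff m v (t - m)

/-- Integrand (1−(1−p)^t)/p, interpreted as t at p = 0. -/
noncomputable def hausdorffKer (t : ℕ) (p : ℝ) : ℝ :=
  if p = 0 then (t : ℝ) else (1 - (1 - p) ^ t) / p

lemma fdiff_one (v : ℕ → ℝ) (t : ℕ) : fdiff 1 v t = v (t+1) - v t := rfl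

lemma fdiff_succ_comm (m : ℕ) (v : ℕ → ℝ) : fdiff (m+1) v = fdiff m (fdiff 1 v) := by
  induction m with
  | zero => rfl
  | succ m ih =>
    funext t
    show fdiff (m+1) v (t+1) - fdiff (m+1) v t = fdiff (m+1) (fdiff 1 v) t
    rw [ih]; rfl

lemma newton (w : ℕ → ℝ) : ∀ r t : ℕ, r ≤ t →
    ∑ m ∈ Finset.range (r+1), (-1:ℝ)^m * (r.choose m) * fdiff m w (t - m) = w (t - r) := by
  intro r
  induction r with
  | zero => intro t _; simp [fdiff]
  | succ r ih =>
    intro t hrt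
    have h1 := ih t (by omega)
    have h2 := ih (t-1) (by omega)
    rw [Finset.sum_range_succ']
    have key : ∀ k ∈ Finset.range (r+1),
        (-1:ℝ)^(k+1) * (((r+1).choose (k+1) : ℕ) : ℝ) * fdiff (k+1) w (t - (k+1))
        = -((-1:ℝ)^k * (r.choose k) * fdiff k w (t - k))
          + ((-1:ℝ)^k * (r.choose k) * fdiff k w (t - 1 - k))
          + (-1:ℝ)^(k+1) * (r.choose (k+1)) * fdiff (k+1) w (t - (k+1)) := by
      intro k hk
      simp only [Finset.mem_range] at hk
      have e1 : t - (k+1) + 1 = t - k := by omega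
      have e2 : t - (k+1) = t - 1 - k := by omega
      have e3 : fdiff (k+1) w (t - (k+1)) = fdiff k w (t - k) - fdiff k w (t - 1 - k) := by
        show fdiff k w (t - (k+1) + 1) - fdiff k w (t - (k+1)) = _
        rw [e1, e2]
      rw [Nat.choose_succ_succ]
      push_cast
      rw [e3]
      ring
    rw [Finset.sum_congr rfl key]
    rw [Finset.sum_add_distrib, Finset.sum_add_distrib, Finset.sum_neg_distrib]
    have hX : ∑ k ∈ Finset.range (r+1), (-1:ℝ)^(k+1) * (r.choose (k+1)) * fdiff (k+1) w (t - (k+1))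
        = w (t - r) - w t := by
      have := Finset.sum_range_succ' (fun m => (-1:ℝ)^m * (r.choose m) * fdiff m w (t - m)) (r+1)
      -- LHS of `this` is sum over range (r+2)
      rw [Finset.sum_range_succ] at this
      simp only [Nat.choose_succ_self, Nat.cast_zero, mul_zero, zero_mul, add_zero,
        pow_zero, Nat.choose_zero_right, Nat.cast_one, mul_one, one_mul, Nat.sub_zero] at this
      have h0 : fdiff 0 w t = w t := rfl
      rw [h0] at this
      rw [h1] at this
      linarith [this]
    rw [hX, h1, h2]
    have : t - 1 - r = t - (r+1) := by omega
    rw [this]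
    simp [fdiff]
    ring

/-- For a Hausdorff sequence v(t) = ∫ (1−(1−p)^t)/p dμ(p) with μ a probability
measure on [0,1] and μ({1}) = 0, the Taylor elements satisfy the consistency
conditions Σ_{m=1}^t v(t‖m) = v(t) and Σ_{m=1}^t m·v(t‖m) = t. -/
theorem stmt18 (μ : Measure ℝ) [IsProbabilityMeasure μ]
    (hsupp : μ (Set.Icc (0 : ℝ) 1)ᶜ = 0) (hone : μ {(1 : ℝ)} = 0)
    (v : ℕ → ℝ) (hv : ∀ t, v t = ∫ p, hausdorffKer t p ∂μ) :
    ∀ t : ℕ, 1 ≤ t →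
      (∑ m ∈ Finset.Icc 1 t, taylorElem v t m) = v t ∧
      (∑ m ∈ Finset.Icc 1 t, (m : ℝ) * taylorElem v t m) = (t : ℝ) := by
  have hv0 : v 0 = 0 := by
    rw [hv 0]
    have hk : ∀ p : ℝ, hausdorffKer 0 p = 0 := by
      intro p; unfold hausdorffKer; split_ifs <;> simp
    simp [hk]
  have hv1 : v 1 = 1 := by
    rw [hv 1]
    have hk : ∀ p : ℝ, hausdorffKer 1 p = 1 := by
      intro p; unfold hausdorffKer
      split_ifs with h
      · norm_num
      · rw [pow_one]
        have : 1 - (1 - p) = p := by ring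
        rw [this, div_self h]
    simp [hk]
  intro t ht
  obtain ⟨s, rfl⟩ : ∃ s, t = s + 1 := ⟨t - 1, by omega⟩
  have hIcc : ∀ f : ℕ → ℝ, ∑ m ∈ Finset.Icc 1 (s+1), f m = ∑ i ∈ Finset.range (s+1), f (i+1) := by
    intro f
    rw [← Finset.Ico_add_one_right_eq_Icc, Finset.sum_Ico_eq_sum_range]
    simp [add_comm]
  constructor
  · -- first identity
    have hN := newton v (s+1) (s+1) le_rfl
    rw [Finset.sum_range_succ'] at hN
    simp only [Nat.sub_self, hv0, pow_zero, Nat.choose_zero_right, Nat.cast_one, one_mul,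
      Nat.sub_zero] at hN
    have h0 : fdiff 0 v (s+1) = v (s+1) := rfl
    rw [h0] at hN
    rw [hIcc]
    have hterm : ∀ i ∈ Finset.range (s+1), taylorElem v (s+1) (i+1)
        = -((-1:ℝ)^(i+1) * (((s+1).choose (i+1) : ℕ) : ℝ) * fdiff (i+1) v (s+1 - (i+1))) := by
      intro i _
      unfold taylorElem
      rw [pow_succ]
      ring
    rw [Finset.sum_congr rfl hterm, Finset.sum_neg_distrib]
    linarith [hN]
  · -- second identity
    have hN := newton (fdiff 1 v) s s le_rfl
    have hw0 : fdiff 1 v (s - s) = 1 := by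
      have : fdiff 1 v 0 = v 1 - v 0 := rfl
      rw [Nat.sub_self, this, hv0, hv1]; ring
    rw [hw0] at hN
    rw [hIcc]
    have hterm : ∀ i ∈ Finset.range (s+1), ((i+1 : ℕ) : ℝ) * taylorElem v (s+1) (i+1)
        = ((s:ℝ)+1) * ((-1:ℝ)^i * ((s.choose i : ℕ) : ℝ) * fdiff i (fdiff 1 v) (s - i)) := by
      intro i _
      unfold taylorElem
      have e1 : s + 1 - (i+1) = s - i := by omega
      have e2 : fdiff (i+1) v = fdiff i (fdiff 1 v) := fdiff_succ_comm i v
      rw [e1, e2]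
      have e3 : ((s+1) * s.choose i : ℕ) = ((s+1).choose (i+1) * (i+1) : ℕ) :=
        Nat.add_one_mul_choose_eq s i
      have e4 : ((s:ℝ)+1) * (s.choose i : ℝ) = ((s+1).choose (i+1) : ℝ) * ((i:ℝ)+1) := by
        exact_mod_cast congrArg (Nat.cast : ℕ → ℝ) e3
      push_cast
      rw [pow_succ, pow_succ]
      linear_combination (-((-1:ℝ)^i * fdiff i (fdiff 1 v) (s - i))) * e4
    rw [Finset.sum_congr rfl hterm, ← Finset.mul_sum, hN]
    push_cast
    ring
end
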